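/- Let T be an almost ray, let l : V(T) → [0,∞) be a non-degenerate labeling, and suppose there exists an infinite subset A ⊆ V(T) that is totally bounded in the ultrametric space (V(T), d_l). Then the whole space (V(T), d_l) is totally bounded. -/

import Mathlib

open SimpleGraph

/-- `d` is an ultrametric on `V`: a metric satisfying the strong triangle inequality. -/
def IsUltrametricOn {V : Type*} (d : V → V → ℝ) : Prop :=
  (∀ x y, 0 ≤ d x y) ∧ (∀ x y, d x y = d y x) ∧
    (∀ x y, d x y = 0 ↔ x = y) ∧
    ∀ x y z, d x y ≤ max (d x z) (d z y)

/-- The vertex labeling `l` of the graph `G` is non-degenerate: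
`max {l u, l v} > 0` for every edge `{u, v}`. -/
def NondegenerateLabeling {V : Type*} (G : SimpleGraph V) (l : V → ℝ) : Prop :=
  ∀ u v, G.Adj u v → 0 < max (l u) (l v)

/-- `d` is the function `d_l` generated by the vertex labeling `l` on the tree `G`:
`d u u = 0`, and for `u ≠ v`, `d u v` is the maximum of the labels of the vertices of
the (unique) path joining `u` and `v`. -/
def IsLabelDist {V : Type*} (G : SimpleGraph V) (l : V → ℝ) (d : V → V → ℝ) : Prop :=
  (∀ u, d u u = 0) ∧
    ∀ u v : V, u ≠ v → ∀ p : G.Walk u v, p.IsPath →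
      IsGreatest (l '' {w | w ∈ p.support}) (d u v)

/-- `x` is a Cauchy sequence with respect to the distance function `d`. -/
def CauchyWith {V : Type*} (d : V → V → ℝ) (x : ℕ → V) : Prop :=
  ∀ ε : ℝ, 0 < ε → ∃ N : ℕ, ∀ m ≥ N, ∀ n ≥ N, d (x m) (x n) < ε

/-- The set `A` is totally bounded with respect to the distance function `d`:
for every `r > 0` it is covered by finitely many open balls of radius `r` centered in `A`. -/
def TotallyBoundedWith {V : Type*} (d : V → V → ℝ) (A : Set V) : Prop :=
  ∀ r : ℝ, 0 < r → ∃ s : Finset V, ↑s ⊆ A ∧ ∀ x ∈ A, ∃ c ∈ s, d c x < r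

/-- The space `V` with distance `d` is compact: every cover of `V` by open balls
(given by center–radius pairs) contains a finite subcover. -/
def CompactWith {V : Type*} (d : V → V → ℝ) : Prop :=
  ∀ F : Set (V × ℝ), (∀ x : V, ∃ p ∈ F, d p.1 x < p.2) →
    ∃ s : Finset (V × ℝ), ↑s ⊆ F ∧ ∀ x : V, ∃ p ∈ s, d p.1 x < p.2

/-- The subgraph `R` of `G` is a ray: its vertices can be enumerated as a sequence
`f 0, f 1, …` of pairwise distinct vertices, with edges exactly `{f n, f (n+1)}`. -/
def IsRaySubgraph {V : Type*} {G : SimpleGraph V} (R : G.Subgraph) : Prop :=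
  ∃ f : ℕ → V, Function.Injective f ∧ R.verts = Set.range f ∧
    ∀ x y, R.Adj x y ↔ ∃ n, (x = f n ∧ y = f (n + 1)) ∨ (x = f (n + 1) ∧ y = f n)

/-- The subgraph `T₀` of `G` is a finite subtree. -/
def IsFiniteSubtree {V : Type*} {G : SimpleGraph V} (T₀ : G.Subgraph) : Prop :=
  T₀.verts.Finite ∧ T₀.coe.IsTree

/-- The subgraph `H` of `G` is almost a ray: `H` is the union of a ray and a finite subtree. -/
def IsAlmostRaySubgraph {V : Type*} {G : SimpleGraph V} (H : G.Subgraph) : Prop :=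
  ∃ R T₀ : G.Subgraph, IsRaySubgraph R ∧ IsFiniteSubtree T₀ ∧ T₀ ⊔ R = H

/-- The graph `G` is almost a ray: `G` is the union of a ray and a finite subtree. -/
def IsAlmostRayGraph {V : Type*} (G : SimpleGraph V) : Prop :=
  ∃ R T₀ : G.Subgraph, IsRaySubgraph R ∧ IsFiniteSubtree T₀ ∧ T₀ ⊔ R = ⊤

/-- `H` is the convex hull of the vertex set `A` in `G`: a subtree containing `A`
which is a subgraph of every subtree of `G` containing `A`. -/
def IsConvexHullSubtree {V : Type*} (G : SimpleGraph V) (A : Set V) (H : G.Subgraph) : Prop :=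
  H.coe.IsTree ∧ A ⊆ H.verts ∧
    ∀ H' : G.Subgraph, H'.coe.IsTree → A ⊆ H'.verts → H ≤ H'

/-!
Split `T` into a finite set of vertices and a ray `f 0, f 1, …`. Infinitely many ray vertices
lie in `A`, so for a given `r > 0` infinitely many of them lie in one `r`-ball of a finite cover
of `A`, say around `c`. Fix one such index `n₀`. On the ray, `d_l (f n₀) (f i)` is the largest
label on `f n₀, …, f i`, hence nondecreasing in `i`; since every `i` is exceeded by some index
of a vertex in the ball around `c`, the strong triangle inequality through `c` bounds
`d_l (f n₀) (f i)` by `r` for all `i ≥ n₀`. So finitely many balls cover `V(T)`.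
-/

namespace SimpleGraph

variable {V : Type*} {G : SimpleGraph V} {f : ℕ → V}

def rayWalk (h : ∀ n, G.Adj (f n) (f (n + 1))) : (n k : ℕ) → G.Walk (f n) (f (n + k))
  | _, 0 => Walk.nil
  | n, k + 1 => (rayWalk h n k).append (Walk.cons (h (n + k)) Walk.nil)

theorem support_rayWalk (h : ∀ n, G.Adj (f n) (f (n + 1))) (n k : ℕ) :
    (rayWalk h n k).support = (List.range' n (k + 1)).map f := by
  induction k with
  | zero => simp [rayWalk]
  | succ k ih =>
    have hrange : List.range' n (k + 1 + 1) = List.range' n (k + 1) ++ [n + (k + 1)] := by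
      simpa using List.range'_concat (step := 1) (s := n) (n := k + 1)
    rw [rayWalk, Walk.support_append, ih, hrange]
    simp [Nat.add_assoc]

theorem mem_support_rayWalk (h : ∀ n, G.Adj (f n) (f (n + 1))) {n k : ℕ} {w : V} :
    w ∈ (rayWalk h n k).support ↔ ∃ j, n ≤ j ∧ j ≤ n + k ∧ f j = w := by
  simp only [support_rayWalk, List.mem_map, List.mem_range'_1]
  exact exists_congr fun j =>
    ⟨fun ⟨⟨h₁, h₂⟩, h₃⟩ => ⟨h₁, by omega, h₃⟩, fun ⟨h₁, h₂, h₃⟩ => ⟨⟨h₁, by omega⟩, h₃⟩⟩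

theorem isPath_rayWalk (hf : Function.Injective f) (h : ∀ n, G.Adj (f n) (f (n + 1)))
    (n k : ℕ) : (rayWalk h n k).IsPath := by
  rw [Walk.isPath_def, support_rayWalk]
  exact (List.nodup_range' (s := n) (n := k + 1)).map hf

end SimpleGraph

namespace IsLabelDist

variable {V : Type*} {G : SimpleGraph V} {l : V → ℝ} {d : V → V → ℝ}

theorem symm (hG : G.Connected) (hd : IsLabelDist G l d) (u v : V) : d u v = d v u := by
  rcases eq_or_ne u v with rfl | huv
  · rfl
  obtain ⟨p, hp⟩ := hG.preconnected.exists_isPath u v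
  have hrev := hd.2 v u huv.symm p.reverse hp.reverse
  simp only [Walk.support_reverse, List.mem_reverse] at hrev
  exact (hd.2 u v huv p hp).unique hrev

theorem le_max_of_ne (hG : G.Connected) (hd : IsLabelDist G l d) {u v : V} (huv : u ≠ v)
    (w : V) : d u v ≤ max (d u w) (d w v) := by
  classical
  rcases eq_or_ne u w with rfl | huw
  · exact le_max_right _ _
  rcases eq_or_ne w v with rfl | hwv
  · exact le_max_left _ _
  obtain ⟨p, hp⟩ := hG.preconnected.exists_isPath u w
  obtain ⟨q, hq⟩ := hG.preconnected.exists_isPath w v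
  obtain ⟨x, hx, hdx⟩ := (hd.2 u v huv _ (p.append q).bypass_isPath).1
  rw [← hdx]
  rcases (Walk.mem_support_append_iff _ _).1 (Walk.support_bypass_subset_support _ hx) with
    hx | hx
  · exact le_max_of_le_left ((hd.2 u w huw p hp).2 ⟨x, hx, rfl⟩)
  · exact le_max_of_le_right ((hd.2 w v hwv q hq).2 ⟨x, hx, rfl⟩)

theorem le_of_ray (hd : IsLabelDist G l d) {f : ℕ → V} (hf : Function.Injective f)
    (h : ∀ n, G.Adj (f n) (f (n + 1))) {n i m : ℕ} (hni : n < i) (him : i ≤ m) :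
    d (f n) (f i) ≤ d (f n) (f m) := by
  obtain ⟨j, rfl⟩ := Nat.exists_eq_add_of_le hni.le
  obtain ⟨k, rfl⟩ := Nat.exists_eq_add_of_le (hni.le.trans him)
  have hne : ∀ {a}, n < n + a → f n ≠ f (n + a) := fun ha heq => ha.ne (hf heq)
  obtain ⟨x, hx, hdx⟩ := (hd.2 _ _ (hne hni) _ (isPath_rayWalk hf h n j)).1
  obtain ⟨y, hny, hyj, rfl⟩ := (mem_support_rayWalk h).1 hx
  rw [← hdx]
  exact (hd.2 _ _ (hne (hni.trans_le him)) _ (isPath_rayWalk hf h n k)).2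
    ⟨f y, (mem_support_rayWalk h).2 ⟨y, hny, by omega, rfl⟩, rfl⟩

theorem exists_tail_lt_of_infinite (hG : G.Connected) (hd : IsLabelDist G l d) {f : ℕ → V}
    (hf : Function.Injective f) (h : ∀ n, G.Adj (f n) (f (n + 1))) {c : V} {r : ℝ}
    (hc : {n | d c (f n) < r}.Infinite) : ∃ n₀, ∀ i, n₀ < i → d (f n₀) (f i) < r := by
  obtain ⟨n₀, hn₀⟩ := hc.nonempty
  refine ⟨n₀, fun i hi => ?_⟩
  obtain ⟨m, hm, him⟩ := hc.exists_gt i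
  calc d (f n₀) (f i) ≤ d (f n₀) (f m) := le_of_ray hd hf h hi him.le
    _ ≤ max (d (f n₀) c) (d c (f m)) := le_max_of_ne hG hd (hf.ne (hi.trans him).ne) c
    _ < r := max_lt (symm hG hd (f n₀) c ▸ hn₀) hm

end IsLabelDist

theorem TotallyBoundedWith.exists_infinite_ball {V : Type*} {d : V → V → ℝ} {A : Set V}
    (hA : TotallyBoundedWith d A) {g : ℕ → V} (hg : (g ⁻¹' A).Infinite) {r : ℝ} (hr : 0 < r) :
    ∃ c, {n | d c (g n) < r}.Infinite := by
  obtain ⟨s, -, hs⟩ := hA r hr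
  by_contra! hfin
  refine hg ((s.finite_toSet.biUnion fun c _ => hfin c).subset fun n hn => ?_)
  obtain ⟨c, hc, hcn⟩ := hs (g n) hn
  exact Set.mem_biUnion hc hcn

theorem IsAlmostRayGraph.exists_finite_union_ray {V : Type*} {G : SimpleGraph V}
    (hG : IsAlmostRayGraph G) :
    ∃ S : Set V, S.Finite ∧ ∃ f : ℕ → V, Function.Injective f ∧
      (∀ n, G.Adj (f n) (f (n + 1))) ∧ ∀ v, v ∈ S ∨ v ∈ Set.range f := by
  obtain ⟨R, T₀, ⟨f, hf, hverts, hadj⟩, ⟨hT₀, -⟩, hsup⟩ := hG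
  refine ⟨T₀.verts, hT₀, f, hf, fun n => R.adj_sub ((hadj _ _).2 ⟨n, Or.inl ⟨rfl, rfl⟩⟩),
    fun v => ?_⟩
  have hv : v ∈ (T₀ ⊔ R).verts := by simp [hsup]
  rwa [Subgraph.verts_sup, hverts] at hv

theorem stmt16_general {V : Type*} (G : SimpleGraph V) (hG : G.IsTree)
    (hAR : IsAlmostRayGraph G)
    (l : V → ℝ)
    (d : V → V → ℝ) (hd : IsLabelDist G l d)
    (A : Set V) (hA : A.Infinite) (htbA : TotallyBoundedWith d A) :
    TotallyBoundedWith d Set.univ := by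
  classical
  obtain ⟨S, hS, f, hf, hadj, hcover⟩ := hAR.exists_finite_union_ray
  have hAf : (f ⁻¹' A).Infinite :=
    ((hA.sdiff hS).preimage fun v hv => (hcover v).resolve_left hv.2).mono fun _ hn => hn.1
  intro r hr
  obtain ⟨c, hc⟩ := htbA.exists_infinite_ball hAf hr
  obtain ⟨n₀, hn₀⟩ := hd.exists_tail_lt_of_infinite hG.1 hf hadj hc
  refine ⟨hS.toFinset ∪ (Finset.range (n₀ + 1)).image f, Set.subset_univ _, fun x _ => ?_⟩
  have hmem : ∀ i ≤ n₀, f i ∈ hS.toFinset ∪ (Finset.range (n₀ + 1)).image f := fun i hi =>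
    Finset.mem_union_right _ (Finset.mem_image_of_mem f (Finset.mem_range.2 (by omega)))
  have hself : d x x < r := (hd.1 x).symm ▸ hr
  rcases hcover x with hx | ⟨i, rfl⟩
  · exact ⟨x, Finset.mem_union_left _ (hS.mem_toFinset.2 hx), hself⟩
  rcases le_or_gt i n₀ with hi | hi
  · exact ⟨f i, hmem i hi, hself⟩
  · exact ⟨f n₀, hmem n₀ le_rfl, hn₀ i hi⟩

/-- Let `T` be an almost ray, `l` a non-degenerate labeling and suppose
there is an infinite subset `A ⊆ V(T)` totally bounded in `(V(T), d_l)`. Then the whole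
space `(V(T), d_l)` is totally bounded. -/
theorem stmt16 {V : Type*} (G : SimpleGraph V) (hG : G.IsTree)
    (hAR : IsAlmostRayGraph G)
    (l : V → ℝ) (hl : ∀ w, 0 ≤ l w) (hnd : NondegenerateLabeling G l)
    (d : V → V → ℝ) (hd : IsLabelDist G l d)
    (A : Set V) (hA : A.Infinite) (htbA : TotallyBoundedWith d A) :
    TotallyBoundedWith d Set.univ :=
  stmt16_general G hG hAR l d hd A hA htbA
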